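/- arXiv:2303.04106 — 8 statements merged into one kernel-verified Lean document; each statement's English description precedes it below -/
import Mathlib

section
/- For every nonzero integer n, the distance from √2·n to the nearest integer is strictly greater than 1/(2√2·|n| + 1); that is, for every integer m one has |√2·n − m| > 1/(2√2·|n| + 1). -/
/-- For every nonzero integer `n` and every integer `m`,
`|√2·n − m| > 1/(2√2·|n| + 1)`. -/
theorem stmt_2 (n : ℤ) (hn : n ≠ 0) (m : ℤ) :
    1 / (2 * Real.sqrt 2 * |(n : ℝ)| + 1) < |Real.sqrt 2 * (n : ℝ) - (m : ℝ)| := by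
  have hs : Real.sqrt 2 ^ 2 = 2 := Real.sq_sqrt (by norm_num)
  have hs0 : (0:ℝ) < Real.sqrt 2 := Real.sqrt_pos.mpr (by norm_num)
  have hs1 : 1 < Real.sqrt 2 := by nlinarith
  have hn1 : (1:ℝ) ≤ |(n : ℝ)| := by
    rw [← Int.cast_abs]
    exact_mod_cast Int.one_le_abs hn
  have hnne : ((n:ℝ)) ≠ 0 := by exact_mod_cast hn
  have hden : (1:ℝ) < 2 * Real.sqrt 2 * |(n : ℝ)| + 1 := by nlinarith
  -- the integer 2n² - m² is nonzero
  have hknz : (2 * n ^ 2 - m ^ 2 : ℤ) ≠ 0 := by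
    intro h
    have hm2 : (m : ℝ) ^ 2 = 2 * (n : ℝ) ^ 2 := by
      have : (m : ℤ) ^ 2 = 2 * n ^ 2 := by linarith
      exact_mod_cast this
    have hsq : Real.sqrt 2 = |(m : ℝ)| / |(n : ℝ)| := by
      rw [← Real.sqrt_sq_eq_abs, ← Real.sqrt_sq_eq_abs]
      rw [← Real.sqrt_div' _ (by positivity)]
      congr 1
      field_simp
      linarith [hm2]
    exact irrational_sqrt_two ⟨(|m| : ℚ) / (|n| : ℚ), by push_cast [hsq]; ring⟩
  have hk1 : (1:ℝ) ≤ |2 * (n:ℝ) ^ 2 - (m:ℝ) ^ 2| := by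
    have := Int.one_le_abs hknz
    have : (1:ℝ) ≤ |((2 * n ^ 2 - m ^ 2 : ℤ) : ℝ)| := by
      rw [← Int.cast_abs]; exact_mod_cast this
    simpa using this
  have hkey : (1:ℝ) ≤ |Real.sqrt 2 * n - m| * |Real.sqrt 2 * n + m| := by
    rw [← abs_mul]
    have : (Real.sqrt 2 * n - m) * (Real.sqrt 2 * n + m) = 2 * (n:ℝ)^2 - (m:ℝ)^2 := by
      nlinarith [hs]
    rw [this]; exact hk1
  have habs : |Real.sqrt 2 * (n:ℝ)| = Real.sqrt 2 * |(n:ℝ)| := by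
    rw [abs_mul, abs_of_pos hs0]
  rcases le_or_gt (Real.sqrt 2 * |(n:ℝ)| + 1) |(m:ℝ)| with hbig | hsmall
  · -- |m| is big: |√2n - m| ≥ |m| - √2|n| ≥ 1
    have h1 : |(m:ℝ)| - |Real.sqrt 2 * (n:ℝ)| ≤ |Real.sqrt 2 * (n:ℝ) - (m:ℝ)| := by
      have := abs_sub_abs_le_abs_sub (m:ℝ) (Real.sqrt 2 * (n:ℝ))
      rw [abs_sub_comm] at this
      linarith
    rw [habs] at h1
    have h2 : 1 / (2 * Real.sqrt 2 * |(n : ℝ)| + 1) < 1 := by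
      rw [div_lt_one (by linarith)]; linarith
    linarith
  · -- |m| is small: |√2n + m| < 2√2|n| + 1
    have hb : |Real.sqrt 2 * (n:ℝ) + (m:ℝ)| < 2 * Real.sqrt 2 * |(n : ℝ)| + 1 := by
      calc |Real.sqrt 2 * (n:ℝ) + (m:ℝ)| ≤ |Real.sqrt 2 * (n:ℝ)| + |(m:ℝ)| := abs_add_le _ _
        _ < 2 * Real.sqrt 2 * |(n : ℝ)| + 1 := by rw [habs]; linarith
    have ha : 0 < |Real.sqrt 2 * (n:ℝ) - (m:ℝ)| := by
      by_contra h
      push_neg at h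
      nlinarith [abs_nonneg (Real.sqrt 2 * (n:ℝ) + (m:ℝ))]
    rw [div_lt_iff₀ (by linarith)]
    nlinarith [abs_nonneg (Real.sqrt 2 * (n:ℝ) + (m:ℝ))]
end

section
/- For every nonzero integer n, the complex number e^{2√2·π·n·i} satisfies |e^{2√2·π·n·i} − 1| > 4/(2√2·|n| + 1). -/
/-!
Write `√2 n = m + y` with `m` the nearest integer, so `|y| ≤ 1/2`. Since `√2 n` is irrational,
`2n² - m² = (√2 n - m)(√2 n + m)` is a nonzero integer, and `|√2 n + m| ≤ 2√2|n| + 1/2`; hence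
`|y| ≥ 1 / (2√2|n| + 1/2)`. On the other side `|e^{2πi√2 n} - 1| = 2|sin(π y)| ≥ 4|y|` by Jordan's
inequality.
-/

open Real

theorem one_le_abs_sub_mul_abs_add {x : ℝ} {d : ℤ} (hx : Irrational x) (hxd : x ^ 2 = d)
    (n m : ℤ) (hn : n ≠ 0) : 1 ≤ |x * n - m| * |x * n + m| := by
  have hxn : Irrational (x * n) := hx.mul_intCast hn
  have hprod : (x * n - m) * (x * n + m) = ((d * n ^ 2 - m ^ 2 : ℤ) : ℝ) := by
    push_cast; rw [← hxd]; ring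
  have hne : d * n ^ 2 - m ^ 2 ≠ 0 := by
    have h1 : x * n - m ≠ 0 := sub_ne_zero.2 (hxn.ne_int m)
    have h2 : x * n + m ≠ 0 := by
      simpa [sub_neg_eq_add] using sub_ne_zero.2 (hxn.ne_int (-m))
    exact_mod_cast hprod ▸ mul_ne_zero h1 h2
  rw [← abs_mul, hprod, ← Int.cast_abs]
  exact_mod_cast Int.one_le_abs hne

theorem one_div_le_abs_sub_round {x : ℝ} {d : ℤ} (hx : Irrational x) (hxd : x ^ 2 = d)
    (n : ℤ) (hn : n ≠ 0) : 1 / (2 * |x| * |(n : ℝ)| + 1 / 2) ≤ |x * n - round (x * n)| := by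
  set m := round (x * n)
  have hy : |x * n - m| ≤ 1 / 2 := abs_sub_round _
  have hsum : |x * n + m| ≤ 2 * |x| * |(n : ℝ)| + 1 / 2 := by
    have : x * n + m = 2 * (x * n) - (x * n - m) := by ring
    rw [this]
    calc _ ≤ |2 * (x * n)| + |x * n - m| := abs_sub _ _
      _ ≤ _ := by rw [abs_mul, abs_mul, abs_two]; linarith
  have hpos : 0 < 2 * |x| * |(n : ℝ)| + 1 / 2 := by positivity
  rw [div_le_iff₀ hpos]
  calc 1 ≤ |x * n - m| * |x * n + m| := one_le_abs_sub_mul_abs_add hx hxd n m hn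
    _ ≤ _ := by gcongr

theorem four_mul_abs_sub_round_le_norm_exp_sub_one (t : ℝ) :
    4 * |t - round t| ≤ ‖Complex.exp ((2 * π * t : ℝ) * Complex.I) - 1‖ := by
  rw [mul_comm _ Complex.I, Complex.norm_exp_I_mul_ofReal_sub_one, norm_mul, Real.norm_two,
    Real.norm_eq_abs, show 2 * π * t / 2 = π * (t - round t) + round t * π by ring,
    sin_add_int_mul_pi, abs_mul, abs_neg_one_zpow, one_mul]
  have hy : |π * (t - round t)| ≤ π / 2 := by
    rw [abs_mul, abs_of_pos pi_pos]
    nlinarith [abs_sub_round t, pi_pos]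
  calc 4 * |t - round t| = 2 * (2 / π * |π * (t - round t)|) := by
        rw [abs_mul, abs_of_pos pi_pos]; field_simp; ring
    _ ≤ 2 * |sin (π * (t - round t))| := by gcongr; exact mul_abs_le_abs_sin hy

/-- For every nonzero integer `n`, `|e^{2√2·π·n·i} − 1| > 4/(2√2·|n| + 1)`. -/
theorem stmt_3 (n : ℤ) (hn : n ≠ 0) :
    4 / (2 * Real.sqrt 2 * |(n : ℝ)| + 1) <
      ‖Complex.exp ((2 * Real.sqrt 2 * Real.pi * (n : ℝ) : ℝ) * Complex.I) - 1‖ := by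
  have hsqrt : (√2 : ℝ) ^ 2 = ((2 : ℤ) : ℝ) := by norm_num
  have hround := one_div_le_abs_sub_round irrational_sqrt_two hsqrt n hn
  rw [abs_of_nonneg (sqrt_nonneg 2)] at hround
  calc 4 / (2 * √2 * |(n : ℝ)| + 1) < 4 / (2 * √2 * |(n : ℝ)| + 1 / 2) := by gcongr; norm_num
    _ = 4 * (1 / (2 * √2 * |(n : ℝ)| + 1 / 2)) := by ring
    _ ≤ 4 * |√2 * n - round (√2 * n)| := by gcongr
    _ ≤ _ := by
      convert four_mul_abs_sub_round_le_norm_exp_sub_one (√2 * n) using 5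
      push_cast; ring
end

section
/- Let M be a compact connected smooth manifold without boundary, let μ be a finite Borel measure on M that assigns positive measure to every nonempty open set, and let 𝒰 = {U_1,…,U_m} be a finite open cover of M. Then there exists a constant C > 0, depending only on M, μ and 𝒰, such that every smooth function f : M → ℝ with ∫_M f dμ = 0 can be written as f = f_1 + ⋯ + f_m where, for each 1 ≤ i ≤ m, f_i : M → ℝ is smooth, the support of f_i is contained in U_i, ∫_M f_i dμ = 0, and ‖f_i‖_∞ ≤ C‖f‖_∞. -/
open MeasureTheory Set
open scoped Manifold ContDiff

/-!
Cut `f` with a smooth partition of unity `(pᵢ)` subordinate to the cover. The pieces `pᵢ f` have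
the right supports and sum, and their integrals `aᵢ` add up to `∫ f = 0`; what remains is to move
mass between the `Uᵢ` without changing the sum of the pieces. A bump of unit integral supported in
`Uᵢ ∩ Uⱼ`, added to the `j`-th and subtracted from the `i`-th piece, moves unit mass from `Uᵢ` to
`Uⱼ`, and since `M` is connected any two nonempty `Uᵢ` are joined by a chain of overlapping ones.
Fixing once and for all such a transfer from a base set `U_{i₀}` to each `Uⱼ` and combining them
with the coefficients `aⱼ` gives a correction of size `O(∑ |aⱼ|) = O(μ(M) ‖f‖_∞)`.
-/

lemma Continuous.integrable_of_compactSpace {X F : Type*} [TopologicalSpace X] [CompactSpace X]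
    [MeasurableSpace X] [OpensMeasurableSpace X] {μ : Measure X} [IsFiniteMeasure μ]
    [NormedAddCommGroup F] {f : X → F} (hf : Continuous f) : Integrable f μ :=
  hf.integrable_of_hasCompactSupport (.of_compactSpace f)

lemma abs_le_iSup_abs {X : Type*} [TopologicalSpace X] [CompactSpace X] {f : X → ℝ}
    (hf : Continuous f) (x : X) : |f x| ≤ ⨆ y, |f y| :=
  le_ciSup (isCompact_range hf.abs).bddAbove x

lemma exists_forall_abs_le_of_continuous {ι X : Type*} [Fintype ι] [TopologicalSpace X]
    [CompactSpace X] {F : ι → X → ℝ} (hF : ∀ i, Continuous (F i)) :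
    ∃ B, 0 ≤ B ∧ ∀ i x, |F i x| ≤ B := by
  obtain ⟨B, hB⟩ :=
    (isCompact_range (continuous_finsetSum Finset.univ fun i _ => (hF i).abs)).bddAbove
  refine ⟨max B 0, le_max_right _ _, fun i x => ?_⟩
  calc |F i x| ≤ ∑ j, |F j x| :=
        Finset.single_le_sum (fun j _ => abs_nonneg (F j x)) (Finset.mem_univ i)
    _ ≤ B := hB ⟨x, rfl⟩
    _ ≤ max B 0 := le_max_left _ _

namespace SmoothPartitionOfUnity

variable {ι E H M : Type*} [NormedAddCommGroup E] [NormedSpace ℝ E]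
  [TopologicalSpace H] {I : ModelWithCorners ℝ E H} [TopologicalSpace M] [ChartedSpace H M]

lemma sum_eq_one_of_fintype [Fintype ι] (p : SmoothPartitionOfUnity ι I M) (x : M) :
    ∑ i, p i x = 1 := by
  simpa only [finsum_eq_sum_of_fintype] using p.sum_eq_one (mem_univ x)

lemma abs_mul_le (p : SmoothPartitionOfUnity ι I M) (i : ι) {f : M → ℝ} {B : ℝ}
    (hf : ∀ x, |f x| ≤ B) (x : M) : |p i x * f x| ≤ B := by
  rw [abs_mul, abs_of_nonneg (p.nonneg i x)]
  exact (mul_le_of_le_one_left (abs_nonneg _) (p.le_one i x)).trans (hf x)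

lemma IsSubordinate.eq_zero_of_eq_empty {p : SmoothPartitionOfUnity ι I M} {U : ι → Set M}
    (hp : p.IsSubordinate U) {i : ι} (hi : U i = ∅) (x : M) : p i x = 0 :=
  image_eq_zero_of_notMem_tsupport fun hx => by simpa [hi] using hp i hx

lemma sum_integral_mul [Fintype ι] [MeasurableSpace M] [OpensMeasurableSpace M] {μ : Measure M}
    (p : SmoothPartitionOfUnity ι I M) {f : M → ℝ} (hf : Integrable f μ) :
    ∑ i, ∫ x, p i x * f x ∂μ = ∫ x, f x ∂μ := by
  rw [← integral_finsetSum _ fun i _ => hf.bdd_mul (c := 1)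
    (p i).contMDiff.continuous.aestronglyMeasurable
    (ae_of_all _ fun x => by
      rw [Real.norm_eq_abs, abs_of_nonneg (p.nonneg i x)]; exact p.le_one i x)]
  simp [← Finset.sum_mul, p.sum_eq_one_of_fintype]

end SmoothPartitionOfUnity

section Manifold

variable {E H M : Type*} [NormedAddCommGroup E] [NormedSpace ℝ E] [TopologicalSpace H]
  (I : ModelWithCorners ℝ E H) [TopologicalSpace M] [ChartedSpace H M]

variable {ι : Type*} [Fintype ι]

/-- Adding such a family to the pieces of a decomposition `f = ∑ gₖ` keeps it a decomposition
subordinate to `U` while changing the integrals of the pieces. -/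
def balancedFamilies (U : ι → Set M) : Submodule ℝ (ι → M → ℝ) where
  carrier := {t | (∀ k, ContMDiff I 𝓘(ℝ, ℝ) ∞ (t k)) ∧ (∀ k, tsupport (t k) ⊆ U k) ∧
    ∀ x, ∑ k, t k x = 0}
  add_mem' := by
    rintro s t ⟨hs, hsU, hs0⟩ ⟨ht, htU, ht0⟩
    refine ⟨fun k => (hs k).add (ht k),
      fun k => (tsupport_add _ _).trans (union_subset (hsU k) (htU k)), fun x => ?_⟩
    simp only [Pi.add_apply, Finset.sum_add_distrib, hs0 x, ht0 x, add_zero]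
  zero_mem' := ⟨fun _ => contMDiff_const, fun _ => by simp, fun _ => by simp⟩
  smul_mem' := by
    rintro r t ⟨ht, htU, ht0⟩
    refine ⟨fun k => ?_, fun k => ?_, fun x => ?_⟩
    · exact contMDiff_const.mul (ht k)
    · exact (tsupport_smul_subset_right (fun _ => r) (t k)).trans (htU k)
    · simp [← Finset.mul_sum, ht0 x]

variable [FiniteDimensional ℝ E] [IsManifold I ∞ M] [T2Space M] [MeasurableSpace M] [BorelSpace M]
  (μ : Measure M)

lemma exists_contMDiff_tsupport_subset_integral_eq_one [IsFiniteMeasureOnCompacts μ]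
    [μ.IsOpenPosMeasure] {V : Set M} (hV : IsOpen V) (hVne : V.Nonempty) :
    ∃ b : M → ℝ, ContMDiff I 𝓘(ℝ, ℝ) ∞ b ∧ tsupport b ⊆ V ∧ ∫ x, b x ∂μ = 1 := by
  obtain ⟨c, hc⟩ := hVne
  obtain ⟨β, -, hβV⟩ :=
    (SmoothBumpFunction.nhds_basis_tsupport (I := I) c).mem_iff.1 (hV.mem_nhds hc)
  have hpos : 0 < ∫ x, β x ∂μ := by
    rw [integral_pos_iff_support_of_nonneg (fun _ => β.nonneg)
      (β.continuous.integrable_of_hasCompactSupport β.hasCompactSupport)]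
    exact β.isOpen_support.measure_pos μ ⟨c, by simp⟩
  refine ⟨fun x => (∫ y, β y ∂μ)⁻¹ * β x, contMDiff_const.mul β.contMDiff,
    tsupport_mul_subset_right.trans hβV, ?_⟩
  rw [integral_const_mul, inv_mul_cancel₀ hpos.ne']

lemma exists_mem_balancedFamilies_integral_eq_of_inter_nonempty [DecidableEq ι]
    [IsFiniteMeasureOnCompacts μ] [μ.IsOpenPosMeasure] {U : ι → Set M}
    (hU : ∀ i, IsOpen (U i)) {i j : ι} (hij : (U i ∩ U j).Nonempty) :
    ∃ t ∈ balancedFamilies I U, ∀ k, ∫ x, t k x ∂μ = (Pi.single j 1 - Pi.single i 1 : ι → ℝ) k := by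
  obtain ⟨b, hb, hbU, hb1⟩ :=
    exists_contMDiff_tsupport_subset_integral_eq_one I μ ((hU i).inter (hU j)) hij
  refine ⟨fun k x => ((Pi.single j 1 - Pi.single i 1 : ι → ℝ) k) * b x,
    ⟨fun k => contMDiff_const.mul hb, fun k => ?_, fun x => ?_⟩, fun k => ?_⟩
  · rcases eq_or_ne k i with rfl | hki
    · exact tsupport_mul_subset_right.trans (hbU.trans inter_subset_left)
    rcases eq_or_ne k j with rfl | hkj
    · exact tsupport_mul_subset_right.trans (hbU.trans inter_subset_right)
    simp [hki, hkj]
  · simp [← Finset.sum_mul]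
  · rw [integral_const_mul, hb1, mul_one]

lemma exists_mem_balancedFamilies_integral_eq_of_transGen [DecidableEq ι] [CompactSpace M]
    [IsFiniteMeasure μ] [μ.IsOpenPosMeasure] {U : ι → Set M} (hU : ∀ i, IsOpen (U i)) {i j : ι}
    (hij : Relation.TransGen (fun a b => (U a ∩ U b).Nonempty) i j) :
    ∃ t ∈ balancedFamilies I U, ∀ k, ∫ x, t k x ∂μ = (Pi.single j 1 - Pi.single i 1 : ι → ℝ) k := by
  induction hij with
  | single h => exact exists_mem_balancedFamilies_integral_eq_of_inter_nonempty I μ hU h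
  | tail _ h ih =>
    obtain ⟨s, hs, hs_int⟩ := ih
    obtain ⟨t, ht, ht_int⟩ := exists_mem_balancedFamilies_integral_eq_of_inter_nonempty I μ hU h
    refine ⟨s + t, add_mem hs ht, fun k => ?_⟩
    rw [Pi.add_apply, integral_add' (hs.1 k).continuous.integrable_of_compactSpace
      (ht.1 k).continuous.integrable_of_compactSpace, hs_int, ht_int]
    simp only [Pi.sub_apply]
    ring

lemma exists_bound_mem_balancedFamilies_integral_eq [DecidableEq ι] [CompactSpace M]
    [ConnectedSpace M] [IsFiniteMeasure μ] [μ.IsOpenPosMeasure] {U : ι → Set M}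
    (hU : ∀ i, IsOpen (U i))
    (hUcover : ⋃ i, U i = univ) :
    ∃ C, 0 ≤ C ∧ ∀ a : ι → ℝ, ∑ j, a j = 0 → (∀ j, U j = ∅ → a j = 0) →
      ∃ c ∈ balancedFamilies I U, (∀ k, ∫ x, c k x ∂μ = a k) ∧
        ∀ k x, |c k x| ≤ C * ∑ j, |a j| := by
  obtain ⟨x₀⟩ : Nonempty M := inferInstance
  obtain ⟨i₀, hi₀⟩ := mem_iUnion.1 (hUcover ▸ mem_univ x₀)
  have htransfer : ∀ j, ∃ t ∈ balancedFamilies I U, (U j).Nonempty →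
      ∀ k, ∫ x, t k x ∂μ = (Pi.single j 1 - Pi.single i₀ 1 : ι → ℝ) k := by
    intro j
    by_cases hj : (U j).Nonempty
    · obtain ⟨t, ht, ht_int⟩ := exists_mem_balancedFamilies_integral_eq_of_transGen I μ hU
        ((hUcover ▸ isPreconnected_univ).transGen_of_iUnion hU i₀ j ⟨x₀, hi₀⟩ hj)
      exact ⟨t, ht, fun _ => ht_int⟩
    · exact ⟨0, zero_mem _, fun h => absurd h hj⟩
  choose t ht ht_int using htransfer
  obtain ⟨B, hB0, hB⟩ := exists_forall_abs_le_of_continuous (F := fun p : ι × ι => t p.1 p.2)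
    fun p => ((ht p.1).1 p.2).continuous
  refine ⟨B, hB0, fun a ha0 haU => ⟨∑ j, a j • t j,
    sum_mem fun j _ => Submodule.smul_mem _ _ (ht j), fun k => ?_, fun k x => ?_⟩⟩
  · have hterm : ∀ j, ∫ x, a j * t j k x ∂μ = a j * (Pi.single j 1 - Pi.single i₀ 1 : ι → ℝ) k := by
      intro j
      rw [integral_const_mul]
      rcases (U j).eq_empty_or_nonempty with hj | hj
      · simp [haU j hj]
      · rw [ht_int j hj]
    simp only [Finset.sum_apply, Pi.smul_apply, smul_eq_mul]
    rw [integral_finsetSum _ fun j _ =>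
      ((ht j).1 k).continuous.integrable_of_compactSpace.const_mul _]
    -- `∑ⱼ aⱼ (eⱼ - e_{i₀}) = a` because `∑ⱼ aⱼ = 0`
    simp [hterm, mul_sub, Finset.sum_sub_distrib, ha0, Pi.single_apply]
  · simp only [Finset.sum_apply, Pi.smul_apply, smul_eq_mul]
    calc |∑ j, a j * t j k x| ≤ ∑ j, |a j| * B := by
          refine (Finset.abs_sum_le_sum_abs _ _).trans (Finset.sum_le_sum fun j _ => ?_)
          rw [abs_mul]
          exact mul_le_mul_of_nonneg_left (hB (j, k) x) (abs_nonneg _)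
      _ = B * ∑ j, |a j| := by rw [← Finset.sum_mul, mul_comm]

end Manifold

/-- Localization: any zero-mean smooth function on a compact connected manifold can be
written as a sum of zero-mean smooth functions subordinate to a given finite open cover,
with uniform-norm control of the summands. -/
theorem stmt_9 (d : ℕ) (M : Type*) [TopologicalSpace M]
    [ChartedSpace (EuclideanSpace ℝ (Fin d)) M] [IsManifold (𝓡 d) (⊤ : ℕ∞) M]
    [CompactSpace M] [ConnectedSpace M] [T2Space M]
    [MeasurableSpace M] [BorelSpace M]
    (μ : Measure M) [IsFiniteMeasure μ] [μ.IsOpenPosMeasure]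
    (m : ℕ) (U : Fin m → Set M) (hUopen : ∀ i, IsOpen (U i))
    (hUcover : (⋃ i, U i) = Set.univ) :
    ∃ C : ℝ, 0 < C ∧
      ∀ f : M → ℝ, ContMDiff (𝓡 d) 𝓘(ℝ, ℝ) (⊤ : ℕ∞) f → (∫ x, f x ∂μ) = 0 →
        ∃ g : Fin m → M → ℝ,
          (∀ x, f x = ∑ i, g i x) ∧
          (∀ i, ContMDiff (𝓡 d) 𝓘(ℝ, ℝ) (⊤ : ℕ∞) (g i)) ∧
          (∀ i, tsupport (g i) ⊆ U i) ∧
          (∀ i, (∫ x, g i x ∂μ) = 0) ∧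
          (∀ i x, |g i x| ≤ C * ⨆ y, |f y|) := by
  obtain ⟨p, hp⟩ :=
    SmoothPartitionOfUnity.exists_isSubordinate (𝓡 d) isClosed_univ U hUopen hUcover.ge
  obtain ⟨C, hC0, hC⟩ := exists_bound_mem_balancedFamilies_integral_eq (𝓡 d) μ hUopen hUcover
  refine ⟨1 + C * (m * μ.real univ), by positivity, fun f hf hf0 => ?_⟩
  set F := ⨆ y, |f y|
  have hpf : ∀ j x, |p j x * f x| ≤ F := fun j => p.abs_mul_le j (abs_le_iSup_abs hf.continuous)
  set a : Fin m → ℝ := fun j => ∫ x, p j x * f x ∂μ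
  have ha : ∀ j, |a j| ≤ F * μ.real univ := fun j =>
    norm_integral_le_of_norm_le_const (f := fun x => p j x * f x) (ae_of_all _ (hpf j))
  have ha_empty : ∀ j, U j = ∅ → a j = 0 := fun j hj => by
    simp [a, hp.eq_zero_of_eq_empty hj]
  obtain ⟨c, hc, hc_int, hc_le⟩ := hC a
    (by rw [p.sum_integral_mul hf.continuous.integrable_of_compactSpace, hf0]) ha_empty
  refine ⟨fun i x => p i x * f x - c i x, fun x => ?_,
    fun i => ((p i).contMDiff.mul hf).sub (hc.1 i), fun i => ?_, fun i => ?_, fun i x => ?_⟩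
  · simp [Finset.sum_sub_distrib, ← Finset.sum_mul, p.sum_eq_one_of_fintype, hc.2.2 x]
  · exact (tsupport_sub _ _).trans (union_subset (tsupport_mul_subset_left.trans (hp i)) (hc.2.1 i))
  · show ∫ x, p i x * f x - c i x ∂μ = 0
    rw [integral_sub (f := fun x => p i x * f x)
      ((p i).contMDiff.continuous.mul hf.continuous).integrable_of_compactSpace
      (hc.1 i).continuous.integrable_of_compactSpace, hc_int]
    exact sub_self _
  · calc |p i x * f x - c i x| ≤ |p i x * f x| + |c i x| := abs_sub _ _
      _ ≤ F + C * (m * (F * μ.real univ)) := by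
        refine add_le_add (hpf i x) ((hc_le i x).trans (mul_le_mul_of_nonneg_left ?_ hC0))
        simpa using Finset.sum_le_sum fun j (_ : j ∈ Finset.univ) => ha j
      _ = (1 + C * (m * μ.real univ)) * F := by ring
end

section
/- Let N ≥ 1 be an integer, let B ≥ 0, and let s_1,…,s_N be real numbers with s_1 + ⋯ + s_N = 0 and |s_i| ≤ B for every 1 ≤ i ≤ N. Then there exists a permutation σ of {1,…,N} such that for every 1 ≤ k ≤ N, |Σ_{i=1}^{k} s_{σ(i)}| ≤ B. -/
theorem aux_greedy (N : ℕ) (B : ℝ) (hB : 0 ≤ B) (s : Fin N → ℝ)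
    (hsum : ∑ i, s i = 0) (hbound : ∀ i, |s i| ≤ B) :
    ∀ k, k ≤ N → ∃ g : Fin k → Fin N, Function.Injective g ∧
      ∀ m (hm : m ≤ k), |∑ i : Fin m, s (g (Fin.castLE hm i))| ≤ B := by
  intro k
  induction k with
  | zero =>
    intro _
    refine ⟨Fin.elim0, fun a => a.elim0, fun m hm => ?_⟩
    interval_cases m
    simpa using hB
  | succ k ih =>
    intro hk
    obtain ⟨g, ginj, hg⟩ := ih (Nat.le_of_succ_le hk)
    set p : ℝ := ∑ i : Fin k, s (g i) with hp_def
    have hp : |p| ≤ B := by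
      have := hg k le_rfl
      simpa using this
    set T : Finset (Fin N) := (Finset.univ.image g)ᶜ with hT_def
    have hcardim : (Finset.univ.image g).card = k := by
      rw [Finset.card_image_of_injective _ ginj, Finset.card_univ, Fintype.card_fin]
    have hTcard : T.card = N - k := by
      rw [hT_def, Finset.card_compl, hcardim, Fintype.card_fin]
    have hTne : T.Nonempty := by
      rw [← Finset.card_pos, hTcard]
      omega
    have hTsum : ∑ j ∈ T, s j = -p := by
      have h1 : ∑ j ∈ Finset.univ.image g, s j = p := by
        rw [hp_def, Finset.sum_image (fun i _ j _ h => ginj h)]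
      have h2 := Finset.sum_add_sum_compl (Finset.univ.image g) s
      rw [hsum, h1] at h2
      linarith
    obtain ⟨j, hjT, hpj⟩ : ∃ j ∈ T, |p + s j| ≤ B := by
      rcases le_or_gt 0 p with hp0 | hp0
      · by_cases hall : ∀ j ∈ T, 0 < s j
        · exfalso
          have := Finset.sum_pos hall hTne
          rw [hTsum] at this; linarith
        · push_neg at hall
          obtain ⟨j, hjT, hj⟩ := hall
          refine ⟨j, hjT, abs_le.mpr ⟨?_, ?_⟩⟩
          · have := (abs_le.mp (hbound j)).1; linarith
          · have := (abs_le.mp hp).2; linarith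
      · by_cases hall : ∀ j ∈ T, s j < 0
        · exfalso
          have : ∑ j ∈ T, s j < 0 := Finset.sum_neg hall hTne
          rw [hTsum] at this; linarith
        · push_neg at hall
          obtain ⟨j, hjT, hj⟩ := hall
          refine ⟨j, hjT, abs_le.mpr ⟨?_, ?_⟩⟩
          · have := (abs_le.mp hp).1; linarith
          · have := (abs_le.mp (hbound j)).2; linarith
    have hjnot : ∀ i : Fin k, g i ≠ j := by
      intro i hi
      have : j ∈ Finset.univ.image g := Finset.mem_image.mpr ⟨i, Finset.mem_univ i, hi⟩
      rw [hT_def, Finset.mem_compl] at hjT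
      exact hjT this
    refine ⟨Fin.snoc g j, ?_, ?_⟩
    · intro a b hab
      induction a using Fin.lastCases with
      | last =>
        induction b using Fin.lastCases with
        | last => rfl
        | cast b =>
          rw [Fin.snoc_last, Fin.snoc_castSucc] at hab
          exact absurd hab.symm (hjnot b)
      | cast a =>
        induction b using Fin.lastCases with
        | last =>
          rw [Fin.snoc_last, Fin.snoc_castSucc] at hab
          exact absurd hab (hjnot a)
        | cast b =>
          rw [Fin.snoc_castSucc, Fin.snoc_castSucc] at hab
          exact congrArg Fin.castSucc (ginj hab)
    · intro m hm
      by_cases hm' : m ≤ k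
      · have heq : ∀ i : Fin m,
            (Fin.snoc g j : Fin (k+1) → Fin N) (Fin.castLE hm i) = g (Fin.castLE hm' i) := by
          intro i
          have : Fin.castLE hm i = Fin.castSucc (Fin.castLE hm' i) := by
            apply Fin.ext; simp
          rw [this, Fin.snoc_castSucc]
        simp_rw [heq]
        exact hg m hm'
      · have hmk : m = k + 1 := by omega
        subst hmk
        have : ∑ i : Fin (k+1), s ((Fin.snoc g j : Fin (k+1) → Fin N) (Fin.castLE hm i))
            = p + s j := by
          simp only [Fin.castLE_rfl, id]
          rw [Fin.sum_univ_castSucc]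
          simp [Fin.snoc_castSucc, Fin.snoc_last, hp_def]
        rw [this]
        exact hpj

/-- Rearrangement of a zero-sum sequence keeping all partial sums bounded by `B`. -/
theorem stmt_11 (N : ℕ) (hN : 1 ≤ N) (B : ℝ) (hB : 0 ≤ B) (s : Fin N → ℝ)
    (hsum : ∑ i, s i = 0) (hbound : ∀ i, |s i| ≤ B) :
    ∃ σ : Equiv.Perm (Fin N), ∀ k : Fin N,
      |∑ i ∈ Finset.univ.filter (fun i : Fin N => i ≤ k), s (σ i)| ≤ B := by
  obtain ⟨g, ginj, hg⟩ := aux_greedy N B hB s hsum hbound N le_rfl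
  refine ⟨Equiv.ofBijective g (Finite.injective_iff_bijective.mp ginj), ?_⟩
  intro k
  have hm : k.val + 1 ≤ N := k.isLt
  have hset : Finset.univ.filter (fun i : Fin N => i ≤ k)
      = Finset.univ.map (Fin.castLEEmb hm) := by
    ext x
    simp only [Finset.mem_filter, Finset.mem_univ, true_and, Finset.mem_map,
      Fin.castLEEmb, Function.Embedding.coeFn_mk]
    constructor
    · intro hx
      exact ⟨⟨x.val, Nat.lt_succ_of_le hx⟩, Fin.ext rfl⟩
    · rintro ⟨y, rfl⟩
      exact Fin.le_def.mpr (Nat.lt_succ_iff.mp y.isLt)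
  rw [hset, Finset.sum_map]
  exact hg (k.val + 1) hm
end

section
/- Let S = {q ∈ ℚ : q < 0} ∪ {√2·q : q ∈ ℚ, q > 0} ⊆ ℝ. Then S is dense in ℝ, and for every integer m ≥ 1 and every t_1,…,t_m ∈ S (not necessarily distinct), t_1 + ⋯ + t_m ≠ 0. -/
/-- The set `S = (ℚ ∩ (-∞,0)) ∪ √2·(ℚ ∩ (0,∞))`. -/
def badSet : Set ℝ :=
  {x : ℝ | (∃ q : ℚ, (q : ℝ) < 0 ∧ x = (q : ℝ)) ∨ (∃ q : ℚ, 0 < q ∧ x = Real.sqrt 2 * (q : ℝ))}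

lemma badSum {ι : Type*} (s : Finset ι) (t : ι → ℝ) (h : ∀ i ∈ s, t i ∈ badSet) :
    ∃ a b : ℚ, a ≤ 0 ∧ 0 ≤ b ∧ (s.Nonempty → (a < 0 ∨ 0 < b)) ∧
      ∑ i ∈ s, t i = a + Real.sqrt 2 * b := by
  induction s using Finset.cons_induction with
  | empty => exact ⟨0, 0, le_refl _, le_refl _, by simp, by simp⟩
  | cons i s hi ih =>
    obtain ⟨a, b, ha, hb, _, hsum⟩ := ih (fun j hj => h j (Finset.mem_cons_of_mem hj))
    rcases h i (Finset.mem_cons_self i s) with ⟨q, hq, hx⟩ | ⟨q, hq, hx⟩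
    · have hq' : q < 0 := by exact_mod_cast hq
      exact ⟨q + a, b, by linarith, hb, fun _ => Or.inl (by linarith),
        by rw [Finset.sum_cons, hsum, hx]; push_cast; ring⟩
    · exact ⟨a, q + b, ha, by linarith, fun _ => Or.inr (by linarith),
        by rw [Finset.sum_cons, hsum, hx]; push_cast; ring⟩

/-- `badSet` is dense in `ℝ` and no finite (nonempty) sum of its elements vanishes. -/
theorem stmt_12 :
    Dense badSet ∧
      ∀ m : ℕ, 1 ≤ m → ∀ t : Fin m → ℝ, (∀ i, t i ∈ badSet) → (∑ i, t i) ≠ 0 := by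
  constructor
  · rw [dense_iff_exists_between]
    intro x y hxy
    rcases lt_or_ge x 0 with hx | hx
    · rcases lt_or_ge 0 y with hy | hy
      · -- x < 0 < y : pick negative rational in (x, 0)
        obtain ⟨q, hq1, hq2⟩ := exists_rat_btwn hx
        exact ⟨q, Or.inl ⟨q, hq2, rfl⟩, hq1, lt_trans hq2 hy⟩
      · -- y ≤ 0 : rational in (x,y) is negative
        obtain ⟨q, hq1, hq2⟩ := exists_rat_btwn hxy
        exact ⟨q, Or.inl ⟨q, lt_of_lt_of_le hq2 hy, rfl⟩, hq1, hq2⟩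
    · -- 0 ≤ x < y : pick q ∈ (x/√2, y/√2)
      have h2 : (0:ℝ) < Real.sqrt 2 := by positivity
      have hdiv : x / Real.sqrt 2 < y / Real.sqrt 2 :=
        div_lt_div_of_pos_right hxy h2
      obtain ⟨q, hq1, hq2⟩ := exists_rat_btwn hdiv
      have hq0 : (0:ℝ) < q := lt_of_le_of_lt (by positivity) hq1
      refine ⟨Real.sqrt 2 * q, Or.inr ⟨q, by exact_mod_cast hq0, rfl⟩, ?_, ?_⟩
      · calc x = Real.sqrt 2 * (x / Real.sqrt 2) := by field_simp
          _ < Real.sqrt 2 * q := (mul_lt_mul_iff_right₀ h2).mpr hq1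
      · calc Real.sqrt 2 * (q:ℝ) < Real.sqrt 2 * (y / Real.sqrt 2) :=
            (mul_lt_mul_iff_right₀ h2).mpr hq2
          _ = y := by field_simp
  · intro m hm t ht hsum
    obtain ⟨a, b, ha, hb, hne, heq⟩ := badSum Finset.univ t (fun i _ => ht i)
    rw [hsum] at heq
    have hNE : (Finset.univ : Finset (Fin m)).Nonempty :=
      ⟨⟨0, hm⟩, Finset.mem_univ _⟩
    rcases eq_or_lt_of_le hb with hb0 | hb0
    · rw [← hb0] at heq
      have : (a:ℝ) = 0 := by push_cast at heq; linarith
      have ha0 : a = 0 := by exact_mod_cast this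
      rcases hne hNE with h | h
      · exact absurd ha0 (ne_of_lt h)
      · rw [← hb0] at h; exact lt_irrefl _ h
    · apply irrational_sqrt_two
      refine ⟨-a / b, ?_⟩
      have hbR : (0:ℝ) < b := by exact_mod_cast hb0
      push_cast
      field_simp
      linarith
end

section
/- Let S ⊆ ℝ be a dense subset and let a, b ∈ ℝ with a > b. Then there exist a continuous nonincreasing function h : [0,1] → ℝ with h(0) = a and h(1) = b, and an open set W ⊆ (0,1) whose complement [0,1]∖W has Lebesgue measure zero, such that h is locally constant on W and h(W) ⊆ S. -/
/-!
Enumerate a countable dense subset of `S ∩ (b, a)` injectively as `q n` and give the point `q n`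
the weight `w n = 2⁻¹ ^ (n + 1)`. The mass `v t` of the points above `t` decreases strictly from
`1` at `b` to `0` at `a`, and jumps by `w n` at `q n`. Its generalized inverse `h` is nonincreasing
and continuous (its range is all of `[b, a]`), and equals `q n` on the gap
`(v (q n), v (q n) + w n)`. These gaps are disjoint and have total length `∑ w n = 1`.
-/

open MeasureTheory Set Function

lemma Dense.exists_injective_seq_dense_in_Ioo {S : Set ℝ} (hS : Dense S) {a b : ℝ}
    (hab : b < a) :
    ∃ q : ℕ → ℝ, Injective q ∧ (∀ n, q n ∈ S ∩ Ioo b a) ∧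
      ∀ s t, b ≤ s → t ≤ a → s < t → ∃ n, q n ∈ Ioo s t := by
  obtain ⟨T, hTS, hT_countable, hT_dense⟩ := hS.exists_countable_dense_subset
  have hT_infinite : (Ioo b a ∩ T).Infinite := fun hfin =>
    Ioo_infinite hab <| hfin.subset <|
      hfin.isClosed.closure_eq ▸ hT_dense.open_subset_closure_inter isOpen_Ioo
  have := (countable_infinite_iff_nonempty_denumerable.1
    ⟨hT_countable.mono inter_subset_right, hT_infinite⟩).some
  let e := Denumerable.eqv (Ioo b a ∩ T : Set ℝ)
  refine ⟨fun n => e.symm n, Subtype.val_injective.comp e.symm.injective,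
    fun n => ⟨hTS (e.symm n).2.2, (e.symm n).2.1⟩, fun s t hbs hta hst => ?_⟩
  obtain ⟨c, hcT, hc⟩ := hT_dense.exists_between hst
  exact ⟨e ⟨c, ⟨hbs.trans_lt hc.1, hc.2.trans_le hta⟩, hcT⟩, by simpa using hc⟩

lemma measure_diff_iUnion_eq_zero {α ι : Type*} [MeasurableSpace α] [Countable ι]
    {μ : Measure α} {s : Set α} {J : ι → Set α} (hJs : ∀ i, J i ⊆ s)
    (hJ : ∀ i, MeasurableSet (J i)) (hJ_disj : Pairwise (Disjoint on J)) (hs : μ s ≠ ⊤)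
    (hsum : ∑' i, μ (J i) = μ s) : μ (s \ ⋃ i, J i) = 0 := by
  have hU : μ (⋃ i, J i) = μ s := (measure_iUnion hJ_disj hJ).trans hsum
  rw [measure_sdiff (iUnion_subset hJs) (MeasurableSet.iUnion hJ).nullMeasurableSet
    (hU ▸ hs), hU, tsub_self]

section GeneralizedInverse

/-- The generalized inverse of a map `v` that is antitone on `[b, a]`; the point `a` is inserted
so that the infimum is taken over a nonempty set for every `x`. -/
noncomputable def antiGenInv (v : ℝ → ℝ) (b a x : ℝ) : ℝ :=
  sInf (insert a {t | t ∈ Icc b a ∧ v t ≤ x})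

variable {v : ℝ → ℝ} {a b : ℝ}

lemma mem_lowerBounds_insert_Icc_sep (hba : b ≤ a) (x : ℝ) :
    b ∈ lowerBounds (insert a {t | t ∈ Icc b a ∧ v t ≤ x}) := by
  rintro t (rfl | ⟨ht, -⟩)
  exacts [hba, ht.1]

lemma bddBelow_insert_Icc_sep (hba : b ≤ a) (x : ℝ) :
    BddBelow (insert a {t | t ∈ Icc b a ∧ v t ≤ x}) :=
  ⟨b, mem_lowerBounds_insert_Icc_sep hba x⟩

lemma antiGenInv_mem_Icc (hba : b ≤ a) (x : ℝ) : antiGenInv v b a x ∈ Icc b a :=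
  ⟨le_csInf (insert_nonempty _ _) (mem_lowerBounds_insert_Icc_sep hba x),
    csInf_le (bddBelow_insert_Icc_sep hba x) (mem_insert _ _)⟩

lemma antiGenInv_antitone (hba : b ≤ a) : Antitone (antiGenInv v b a) := by
  intro x y hxy
  refine csInf_le_csInf (bddBelow_insert_Icc_sep hba y) (insert_nonempty _ _) ?_
  rintro t (rfl | ⟨ht, hvt⟩)
  exacts [mem_insert _ _, Or.inr ⟨ht, hvt.trans hxy⟩]

lemma antiGenInv_eq_of_forall_lt {c x : ℝ} (hc : c ∈ Icc b a) (hvc : v c ≤ x)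
    (hlt : ∀ t ∈ Icc b a, t < c → x < v t) : antiGenInv v b a x = c := by
  refine le_antisymm (csInf_le (bddBelow_insert_Icc_sep (hc.1.trans hc.2) x)
    (Or.inr ⟨hc, hvc⟩)) (le_csInf (insert_nonempty _ _) ?_)
  rintro t (rfl | ⟨ht, hvt⟩)
  · exact hc.2
  · exact not_lt.1 fun htc => (hlt t ht htc).not_ge hvt

lemma antiGenInv_apply (hv : StrictAntiOn v (Icc b a)) {t : ℝ} (ht : t ∈ Icc b a) :
    antiGenInv v b a (v t) = t :=
  antiGenInv_eq_of_forall_lt ht le_rfl fun _ hs hst => hv hs ht hst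

/-- An antitone map onto an interval cannot jump, as a jump would leave a gap in its range. -/
lemma antiGenInv_continuous (hba : b ≤ a) (hv : StrictAntiOn v (Icc b a)) :
    Continuous (antiGenInv v b a) := by
  let f : ℝ → (Icc b a)ᵒᵈ := fun x =>
    OrderDual.toDual ⟨antiGenInv v b a x, antiGenInv_mem_Icc hba x⟩
  have hf_mono : Monotone f := fun x y hxy => antiGenInv_antitone hba hxy
  have hf_surj : Surjective f := fun t => ⟨v t.1, Subtype.ext (antiGenInv_apply hv t.2)⟩
  exact continuous_subtype_val.comp (hf_mono.continuous_of_surjective hf_surj)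

end GeneralizedInverse

section TailMass

noncomputable def tailMass (q w : ℕ → ℝ) (t : ℝ) : ℝ := ∑' n, if t < q n then w n else 0

variable {q w : ℕ → ℝ}

variable (q) in
lemma summable_ite_lt (hw0 : ∀ n, 0 ≤ w n) (hw : Summable w) (t : ℝ) :
    Summable fun n => if t < q n then w n else 0 :=
  hw.of_nonneg_of_le (fun n => by split_ifs <;> simp [hw0 n]) fun n => by
    split_ifs <;> simp [hw0 n]

lemma tailMass_nonneg (hw0 : ∀ n, 0 ≤ w n) (t : ℝ) : 0 ≤ tailMass q w t :=
  tsum_nonneg fun n => by split_ifs <;> simp [hw0 n]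

lemma tailMass_eq_tsum {t : ℝ} (h : ∀ n, t < q n) : tailMass q w t = ∑' n, w n := by
  simp [tailMass, h]

lemma tailMass_eq_zero {t : ℝ} (h : ∀ n, q n ≤ t) : tailMass q w t = 0 := by
  simp [tailMass, fun n => (h n).not_gt]

lemma tailMass_add_le (hw0 : ∀ n, 0 ≤ w n) (hw : Summable w) {s t : ℝ} {n : ℕ}
    (hs : s < q n) (ht : q n ≤ t) : tailMass q w t + w n ≤ tailMass q w s := by
  unfold tailMass
  rw [(summable_ite_lt q hw0 hw s).tsum_eq_add_tsum_ite n, if_pos hs, add_comm]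
  refine (add_le_add_iff_left (w n)).2 ((summable_ite_lt q hw0 hw t).tsum_le_tsum (fun m => ?_)
    ((summable_ite_lt q hw0 hw s).of_nonneg_of_le (fun m => ?_) fun m => ?_))
  · rcases eq_or_ne m n with rfl | hmn
    · simp [ht.not_gt]
    · have : t < q m → s < q m := fun htm => hs.trans_le (ht.trans htm.le)
      split_ifs <;> simp_all
  all_goals split_ifs <;> simp [hw0]

lemma tailMass_strictAntiOn (hw0 : ∀ n, 0 < w n) (hw : Summable w) {a b : ℝ}
    (hq : ∀ s t, b ≤ s → t ≤ a → s < t → ∃ n, q n ∈ Ioo s t) :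
    StrictAntiOn (tailMass q w) (Icc b a) := by
  intro s hs t ht hst
  obtain ⟨n, hsn, hnt⟩ := hq s t hs.1 ht.2 hst
  linarith [tailMass_add_le (fun n => (hw0 n).le) hw hsn hnt.le, hw0 n]

variable (q w) in
/-- The gap in the range of `tailMass q w` at its jump at `q n`. -/
def tailGap (n : ℕ) : Set ℝ := Ioo (tailMass q w (q n)) (tailMass q w (q n) + w n)

lemma volume_tailGap (n : ℕ) : volume (tailGap q w n) = ENNReal.ofReal (w n) := by
  simp [tailGap, Real.volume_Ioo]

lemma tailGap_subset (hw0 : ∀ n, 0 ≤ w n) (hw : Summable w) {b : ℝ} {n : ℕ} (hb : b < q n) :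
    tailGap q w n ⊆ Ioo 0 (tailMass q w b) := fun _ hx =>
  ⟨(tailMass_nonneg hw0 _).trans_lt hx.1, hx.2.trans_le (tailMass_add_le hw0 hw hb le_rfl)⟩

lemma pairwise_disjoint_tailGap (hw0 : ∀ n, 0 ≤ w n) (hw : Summable w) (hq : Injective q) :
    Pairwise (Disjoint on tailGap q w) := by
  have hlt {m n : ℕ} (hmn : q m < q n) : Disjoint (tailGap q w n) (tailGap q w m) :=
    (Ioc_disjoint_Ioc_of_le (tailMass_add_le hw0 hw hmn le_rfl)).mono
      Ioo_subset_Ioc_self Ioo_subset_Ioc_self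
  intro m n hmn
  rcases (hq.ne hmn).lt_or_gt with h | h
  exacts [(hlt h).symm, hlt h]

lemma antiGenInv_tailMass_eq_of_mem_tailGap (hw0 : ∀ n, 0 ≤ w n) (hw : Summable w) {a b x : ℝ}
    {n : ℕ} (hq : q n ∈ Icc b a) (hx : x ∈ tailGap q w n) :
    antiGenInv (tailMass q w) b a x = q n :=
  antiGenInv_eq_of_forall_lt hq hx.1.le fun _ _ htn =>
    hx.2.trans_le (tailMass_add_le hw0 hw htn le_rfl)

end TailMass

/-- A Cantor-like nonincreasing continuous function from `a` to `b`, locally constant with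
values in a given dense set `S` on a full-measure open subset of `(0,1)`. -/
theorem stmt_13 (S : Set ℝ) (hS : Dense S) (a b : ℝ) (hab : b < a) :
    ∃ (h : ℝ → ℝ) (W : Set ℝ),
      ContinuousOn h (Set.Icc 0 1) ∧
      AntitoneOn h (Set.Icc 0 1) ∧
      h 0 = a ∧ h 1 = b ∧
      IsOpen W ∧ W ⊆ Set.Ioo 0 1 ∧
      volume (Set.Icc 0 1 \ W) = 0 ∧
      (∀ x ∈ W, ∃ V, V ∈ nhds x ∧ V ⊆ W ∧ ∀ y ∈ V, h y = h x) ∧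
      h '' W ⊆ S := by
  obtain ⟨q, hq_inj, hq_mem, hq_dense⟩ := hS.exists_injective_seq_dense_in_Ioo hab
  set w : ℕ → ℝ := fun n => 1 / 2 / 2 ^ n
  have hw0 (n : ℕ) : 0 ≤ w n := by positivity
  have hw : HasSum w 1 := hasSum_geometric_two' 1
  have hv : StrictAntiOn (tailMass q w) (Icc b a) :=
    tailMass_strictAntiOn (fun n => by positivity) hw.summable hq_dense
  have hva : tailMass q w a = 0 := tailMass_eq_zero fun n => (hq_mem n).2.2.le
  have hvb : tailMass q w b = 1 := (tailMass_eq_tsum fun n => (hq_mem n).2.1).trans hw.tsum_eq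
  have hgap_sub (n : ℕ) : tailGap q w n ⊆ Ioo 0 1 :=
    hvb ▸ tailGap_subset hw0 hw.summable (hq_mem n).2.1
  have hgap_const {n : ℕ} {x : ℝ} (hx : x ∈ tailGap q w n) :
      antiGenInv (tailMass q w) b a x = q n :=
    antiGenInv_tailMass_eq_of_mem_tailGap hw0 hw.summable (Ioo_subset_Icc_self (hq_mem n).2) hx
  refine ⟨antiGenInv (tailMass q w) b a, ⋃ n, tailGap q w n,
    (antiGenInv_continuous hab.le hv).continuousOn, (antiGenInv_antitone hab.le).antitoneOn _,
    hva ▸ antiGenInv_apply hv (right_mem_Icc.2 hab.le),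
    hvb ▸ antiGenInv_apply hv (left_mem_Icc.2 hab.le), isOpen_iUnion fun n => isOpen_Ioo,
    iUnion_subset hgap_sub, ?_, ?_, ?_⟩
  · refine measure_diff_iUnion_eq_zero (fun n => (hgap_sub n).trans Ioo_subset_Icc_self)
      (fun n => measurableSet_Ioo) (pairwise_disjoint_tailGap hw0 hw.summable hq_inj) (by simp) ?_
    rw [Real.volume_Icc, sub_zero, ← hw.tsum_eq,
      ENNReal.ofReal_tsum_of_nonneg hw0 hw.summable]
    exact tsum_congr volume_tailGap
  · intro x hx
    obtain ⟨n, hn⟩ := mem_iUnion.1 hx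
    exact ⟨tailGap q w n, isOpen_Ioo.mem_nhds hn, subset_iUnion _ n,
      fun y hy => (hgap_const hy).trans (hgap_const hn).symm⟩
  · rintro _ ⟨x, hx, rfl⟩
    obtain ⟨n, hn⟩ := mem_iUnion.1 hx
    exact hgap_const hn ▸ (hq_mem n).1
end

section
/- Let G be a compact topological group, let V be a finite-dimensional real vector space of dimension n, and let ρ : G → GL(V) be a continuous representation (i.e., the map (g,v) ↦ ρ(g)v is continuous). Assume that the only vector v ∈ V satisfying ρ(g)v = v for all g ∈ G is v = 0. Then for every ω ∈ V there exist g_1,…,g_{n+1} ∈ G and λ_1,…,λ_{n+1} ∈ [0,1] with λ_1 + ⋯ + λ_{n+1} = 1 such that Σ_{i=1}^{n+1} λ_i · ρ(g_i)ω = 0. -/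
/-!
Averaging the orbit map `g ↦ ρ g ω` against the normalized Haar measure gives a `G`-invariant
vector, which must be `0`. The average lies in the convex hull of the orbit, since that hull is
closed: by Carathéodory it is the continuous image of a simplex times `n + 1` copies of the compact
orbit. Carathéodory again writes `0` as a convex combination of at most `n + 1` orbit points, and
zero weights pad this to exactly `n + 1`.
-/

open MeasureTheory Function Set

theorem exists_fin_convexCombination_of_mem_convexHull {𝕜 E : Type*} [Field 𝕜] [LinearOrder 𝕜]
    [IsStrictOrderedRing 𝕜] [AddCommGroup E] [Module 𝕜 E] [FiniteDimensional 𝕜 E]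
    {s : Set E} {x : E} (hx : x ∈ convexHull 𝕜 s) {m : ℕ} (hm : Module.finrank 𝕜 E + 1 ≤ m) :
    ∃ (w : Fin m → 𝕜) (z : Fin m → E), (∀ i, 0 ≤ w i) ∧ ∑ i, w i = 1 ∧ (∀ i, z i ∈ s) ∧
      ∑ i, w i • z i = x := by
  obtain ⟨ι, _, z, w, hzs, hz_indep, hw_pos, hw_sum, hwz_sum⟩ :=
    eq_pos_convex_span_of_mem_convexHull hx
  obtain ⟨z₀, hz₀⟩ : s.Nonempty := convexHull_nonempty_iff.mp ⟨x, hx⟩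
  obtain ⟨e⟩ : Nonempty (ι ↪ Fin m) := by
    refine Function.Embedding.nonempty_of_card_le ?_
    have := (Submodule.finrank_le (vectorSpan 𝕜 (range z)))
    have := hz_indep.card_le_finrank_succ
    simp only [Fintype.card_fin]
    omega
  refine ⟨extend e w 0, extend e z fun _ => z₀, fun i => ?_, ?_, fun i => ?_, ?_⟩
  · rw [extend_def]
    split_ifs
    exacts [(hw_pos _).le, le_rfl]
  · rw [← hw_sum]
    exact (Fintype.sum_of_injective e e.injective _ _
      (fun i hi => extend_apply' (f := e) w 0 i hi)
      fun j => (e.injective.extend_apply _ _ _).symm).symm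
  · rw [extend_def]
    split_ifs
    exacts [hzs ⟨_, rfl⟩, hz₀]
  · rw [← hwz_sum]
    refine (Fintype.sum_of_injective e e.injective _ _ (fun i hi => ?_) fun j => ?_).symm
    · simp [extend_apply' (f := e) w 0 i hi]
    · simp [e.injective.extend_apply]

theorem isCompact_convexHull {E : Type*} [AddCommGroup E] [Module ℝ E] [FiniteDimensional ℝ E]
    [TopologicalSpace E] [ContinuousAdd E] [ContinuousSMul ℝ E] {K : Set E} (hK : IsCompact K) :
    IsCompact (convexHull ℝ K) := by
  let m := Module.finrank ℝ E + 1
  have hK_hull : convexHull ℝ K = (fun p : (Fin m → ℝ) × (Fin m → E) => ∑ i, p.1 i • p.2 i) ''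
      (stdSimplex ℝ (Fin m) ×ˢ univ.pi fun _ => K) := by
    ext x
    constructor
    · intro hx
      obtain ⟨w, z, hw₀, hw₁, hz, rfl⟩ := exists_fin_convexCombination_of_mem_convexHull hx le_rfl
      exact ⟨(w, z), ⟨⟨hw₀, hw₁⟩, fun i _ => hz i⟩, rfl⟩
    · rintro ⟨⟨w, z⟩, ⟨⟨hw₀, hw₁⟩, hz⟩, rfl⟩
      exact mem_convexHull_of_exists_fintype w z hw₀ hw₁ (fun i => hz i trivial) rfl
  rw [hK_hull]
  exact ((isCompact_stdSimplex ℝ _).prod (isCompact_univ_pi fun _ => hK)).image (by fun_prop)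

theorem integral_mem_convexHull_range {X E : Type*} [TopologicalSpace X] [CompactSpace X]
    [MeasurableSpace X] [OpensMeasurableSpace X] [NormedAddCommGroup E] [NormedSpace ℝ E]
    [FiniteDimensional ℝ E] (μ : Measure X) [IsProbabilityMeasure μ] {f : X → E}
    (hf : Continuous f) : ∫ x, f x ∂μ ∈ convexHull ℝ (range f) :=
  (convex_convexHull ℝ _).integral_mem (isCompact_convexHull (isCompact_range hf)).isClosed
    (ae_of_all _ fun x => subset_convexHull ℝ _ ⟨x, rfl⟩)
    (hf.integrable_of_hasCompactSupport (.of_compactSpace f))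

theorem ContinuousLinearMap.apply_integral_eq_self_of_apply_eq_mul_left {G E : Type*} [Group G]
    [MeasurableSpace G] [MeasurableMul G] {μ : Measure G} [μ.IsMulLeftInvariant]
    [NormedAddCommGroup E] [NormedSpace ℝ E] [CompleteSpace E] (T : E →L[ℝ] E) (h : G)
    {f : G → E} (hf : Integrable f μ) (hT : ∀ g, T (f g) = f (h * g)) :
    T (∫ g, f g ∂μ) = ∫ g, f g ∂μ := by
  rw [← T.integral_comp_comm hf]
  simp_rw [hT]
  exact integral_mul_left_eq_self f h

theorem zero_mem_convexHull_orbit {G V : Type*} [Group G] [TopologicalSpace G]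
    [IsTopologicalGroup G] [CompactSpace G] [AddCommGroup V] [Module ℝ V] [FiniteDimensional ℝ V]
    [TopologicalSpace V] [IsTopologicalAddGroup V] [ContinuousSMul ℝ V] [T2Space V]
    (ρ : G →* (V →ₗ[ℝ] V)ˣ) (hfix : ∀ v : V, (∀ g : G, (ρ g : V →ₗ[ℝ] V) v = v) → v = 0)
    {ω : V} (hω : Continuous fun g => (ρ g : V →ₗ[ℝ] V) ω) :
    (0 : V) ∈ convexHull ℝ (range fun g => (ρ g : V →ₗ[ℝ] V) ω) := by
  let _ : MeasurableSpace G := borel G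
  have : BorelSpace G := ⟨rfl⟩
  let μ : Measure G := Measure.haarMeasure ⊤
  have : IsProbabilityMeasure μ :=
    ⟨by simpa using Measure.haarMeasure_self (K₀ := (⊤ : TopologicalSpace.PositiveCompacts G))⟩
  let e : V ≃L[ℝ] (Fin (Module.finrank ℝ V) → ℝ) :=
    (Module.finBasis ℝ V).equivFun.toContinuousLinearEquiv
  let f : G → Fin (Module.finrank ℝ V) → ℝ := fun g => e ((ρ g : V →ₗ[ℝ] V) ω)
  have hf : Continuous f := e.continuous.comp hω
  let v : V := e.symm (∫ g, f g ∂μ)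
  have hv_mem : v ∈ convexHull ℝ (range fun g => (ρ g : V →ₗ[ℝ] V) ω) := by
    have h := mem_image_of_mem (e.symm : _ →ₗ[ℝ] V) (integral_mem_convexHull_range μ hf)
    rw [LinearMap.image_convexHull, ← range_comp] at h
    convert h using 3
    · ext g
      simp [f]
    · rfl
  have hv_fixed (h : G) : (ρ h : V →ₗ[ℝ] V) v = v := by
    let T := LinearMap.toContinuousLinearMap (e.toLinearEquiv.conj (ρ h : V →ₗ[ℝ] V))
    have hT := T.apply_integral_eq_self_of_apply_eq_mul_left (μ := μ) h
      (hf.integrable_of_hasCompactSupport (.of_compactSpace f)) fun g => by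
        simp [T, f, LinearEquiv.conj_apply]
    apply e.injective
    simpa [T, v, LinearEquiv.conj_apply] using hT
  exact hfix v hv_fixed ▸ hv_mem

theorem stmt_14_general (G : Type*) [Group G] [TopologicalSpace G] [IsTopologicalGroup G]
    [CompactSpace G]
    (V : Type*) [AddCommGroup V] [Module ℝ V] [FiniteDimensional ℝ V]
    [TopologicalSpace V] [IsTopologicalAddGroup V] [ContinuousSMul ℝ V] [T2Space V]
    (ρ : G →* (V →ₗ[ℝ] V)ˣ)
    (hcont : Continuous fun p : G × V => (ρ p.1 : V →ₗ[ℝ] V) p.2)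
    (hfix : ∀ v : V, (∀ g : G, (ρ g : V →ₗ[ℝ] V) v = v) → v = 0) :
    ∀ ω : V, ∃ (g : Fin (Module.finrank ℝ V + 1) → G)
        (lam : Fin (Module.finrank ℝ V + 1) → ℝ),
      (∀ i, lam i ∈ Set.Icc (0 : ℝ) 1) ∧ (∑ i, lam i) = 1 ∧
        (∑ i, lam i • (ρ (g i) : V →ₗ[ℝ] V) ω) = 0 := by
  intro ω
  have hω : Continuous fun g => (ρ g : V →ₗ[ℝ] V) ω := hcont.comp (.prodMk_left ω)
  obtain ⟨lam, z, hlam₀, hlam₁, hz, hsum⟩ :=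
    exists_fin_convexCombination_of_mem_convexHull (zero_mem_convexHull_orbit ρ hfix hω) le_rfl
  choose g hg using hz
  refine ⟨g, lam, fun i => ⟨hlam₀ i, ?_⟩, hlam₁, by simpa only [hg] using hsum⟩
  exact hlam₁ ▸ Finset.single_le_sum (fun j _ => hlam₀ j) (Finset.mem_univ i)

/-- For a continuous representation of a compact group on a finite-dimensional real vector
space with no nonzero invariant vectors, `0` is a convex combination of at most `n+1`
elements of each orbit. -/
theorem stmt_14 (G : Type*) [Group G] [TopologicalSpace G] [IsTopologicalGroup G]
    [CompactSpace G] [T2Space G]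
    (V : Type*) [AddCommGroup V] [Module ℝ V] [FiniteDimensional ℝ V]
    [TopologicalSpace V] [IsTopologicalAddGroup V] [ContinuousSMul ℝ V] [T2Space V]
    (ρ : G →* (V →ₗ[ℝ] V)ˣ)
    (hcont : Continuous fun p : G × V => (ρ p.1 : V →ₗ[ℝ] V) p.2)
    (hfix : ∀ v : V, (∀ g : G, (ρ g : V →ₗ[ℝ] V) v = v) → v = 0) :
    ∀ ω : V, ∃ (g : Fin (Module.finrank ℝ V + 1) → G)
        (lam : Fin (Module.finrank ℝ V + 1) → ℝ),
      (∀ i, lam i ∈ Set.Icc (0 : ℝ) 1) ∧ (∑ i, lam i) = 1 ∧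
        (∑ i, lam i • (ρ (g i) : V →ₗ[ℝ] V) ω) = 0 :=
  stmt_14_general G V ρ hcont hfix
end

section
/- Let Γ be a group, let ν : Γ → ℝ be a function with ν(g) ≥ 0 and ν(gh) ≤ ν(g) + ν(h) for all g,h ∈ Γ, and let r : Γ → ℝ be a homogeneous quasimorphism, i.e. there exists D ≥ 0 with |r(gh) − r(g) − r(h)| ≤ D for all g,h ∈ Γ, and r(g^m) = m·r(g) for all g ∈ Γ and m ∈ ℤ. Suppose C ≥ 0 is a constant such that |r(g)| ≤ C for every g ∈ Γ with ν(g) ≤ 1. Then for every g ∈ Γ with ν(g) ≤ 1/2 one has |r(g)| ≤ 2C·ν(g). -/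
/-- A homogeneous quasimorphism bounded on the unit ball of a subadditive nonnegative
"norm" `ν` is Lipschitz-type controlled near the identity. -/
theorem stmt_18 (Γ : Type*) [Group Γ] (ν r : Γ → ℝ)
    (hν0 : ∀ g, 0 ≤ ν g) (hνsub : ∀ g h : Γ, ν (g * h) ≤ ν g + ν h)
    (D : ℝ) (hD : 0 ≤ D) (hquasi : ∀ g h : Γ, |r (g * h) - r g - r h| ≤ D)
    (hhom : ∀ (g : Γ) (m : ℤ), r (g ^ m) = (m : ℝ) * r g)
    (C : ℝ) (hC : 0 ≤ C) (hball : ∀ g : Γ, ν g ≤ 1 → |r g| ≤ C) :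
    ∀ g : Γ, ν g ≤ 1 / 2 → |r g| ≤ 2 * C * ν g := by
  intro g hg
  -- subadditivity on powers
  have hpow : ∀ n : ℕ, 1 ≤ n → ν (g ^ n) ≤ n * ν g := by
    intro n hn
    induction n with
    | zero => omega
    | succ k ih =>
      rcases Nat.eq_or_lt_of_le hn with h1 | h1
      · simp [← h1]
      · have hk : 1 ≤ k := by omega
        have := hνsub (g ^ k) g
        rw [← pow_succ] at this
        push_cast
        calc ν (g ^ (k + 1)) ≤ ν (g ^ k) + ν g := this
          _ ≤ k * ν g + ν g := by linarith [ih hk]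
          _ = (k + 1) * ν g := by ring
  have hr : ∀ n : ℕ, ν (g ^ n) ≤ 1 → (n : ℝ) * |r g| ≤ C := by
    intro n hle
    have := hball (g ^ n) hle
    have hrn : r (g ^ n) = (n : ℝ) * r g := by
      have := hhom g (n : ℤ)
      simpa using this
    rw [hrn, abs_mul, abs_of_nonneg (by positivity : (0:ℝ) ≤ (n:ℝ))] at this
    exact this
  rcases eq_or_lt_of_le (hν0 g) with h0 | h0
  · -- ν g = 0 : all powers in the ball, so r g = 0
    have key : ∀ n : ℕ, (n : ℝ) * |r g| ≤ C := by
      intro n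
      cases n with
      | zero => simpa using hC
      | succ k =>
        apply hr
        have := hpow (k + 1) (by omega)
        rw [← h0] at this
        simpa using this.trans (by norm_num)
    have : |r g| = 0 := by
      by_contra hne
      have hpos : 0 < |r g| := lt_of_le_of_ne (abs_nonneg _) (Ne.symm hne)
      obtain ⟨n, hn⟩ := exists_nat_gt (C / |r g|)
      have := key n
      have : (n : ℝ) ≤ C / |r g| := (le_div_iff₀ hpos).mpr this
      linarith
    rw [this, ← h0]
    simp
  · -- ν g > 0 : take n = ⌊1 / ν g⌋
    set t := ν g with ht
    have h2 : 2 ≤ 1 / t := by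
      rw [le_div_iff₀ h0]; linarith
    set n := ⌊1 / t⌋₊ with hn
    have hn2 : 2 ≤ n := Nat.le_floor (by exact_mod_cast h2)
    have hnle : (n : ℝ) ≤ 1 / t := Nat.floor_le (by positivity)
    have hngt : 1 / t - 1 < n := by
      have := Nat.lt_floor_add_one (1 / t)
      linarith
    have hnlow : 1 / (2 * t) ≤ (n : ℝ) := by
      have h2t : 2 * t ≤ 1 := by linarith
      have ha : 1 ≤ 1 / (2 * t) := by
        rw [le_div_iff₀ (by positivity)]; linarith
      have hb : 1 / t = 2 * (1 / (2 * t)) := by field_simp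
      linarith
    have hball' : ν (g ^ n) ≤ 1 := by
      have := hpow n (by omega)
      have h2 : (n : ℝ) * t ≤ 1 := by
        rw [← le_div_iff₀ h0]; exact hnle
      linarith
    have hC' := hr n hball'
    have hnpos : (0 : ℝ) < n := by positivity
    have h3 : |r g| ≤ C / n := by
      rw [le_div_iff₀ hnpos]; linarith
    have h4 : C / n ≤ 2 * C * t := by
      rw [div_le_iff₀ hnpos]
      have h1 : (2*t) * (1/(2*t)) ≤ (2*t) * n :=
        mul_le_mul_of_nonneg_left hnlow (by positivity)
      have h2' : (2*t) * (1/(2*t)) = 1 := by field_simp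
      nlinarith
    linarith
end
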